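/- Dynamic programming recursion for the univariate Potts problem: let $g \in \mathbb{R}^n$, $\gamma > 0$, and let $P_r$ denote the minimal value of $u \mapsto \sum_{i=1}^r (u_i - g_i)^2 + \gamma\,\#\{i < r : u_i \neq u_{i+1}\}$ over $u \in \mathbb{R}^r$, with $P_0 := -\gamma$. Then for all $1 \le r \le n$: $P_r = \min_{1 \le l \le r} \big( P_{l-1} + \gamma + \mathcal{E}_{l:r} \big)$, where $\mathcal{E}_{l:r} = \sum_{i=l}^r (g_i - \mu_{l:r})^2$ and $\mu_{l:r} = \frac{1}{r-l+1}\sum_{i=l}^r g_i$. -/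

import Mathlib

/-- Minimal value of the univariate Potts problem on the prefix of length `r`
of the data sequence `g`, with `P 0 = -γ`. -/
noncomputable def pottsVal (γ : ℝ) (g : ℕ → ℝ) : ℕ → ℝ
  | 0 => -γ
  | r + 1 => sInf { v : ℝ | ∃ u : ℕ → ℝ, v =
      (∑ i ∈ Finset.range (r + 1), (u i - g i) ^ 2) +
        γ * ((Finset.range r).filter fun i => u i ≠ u (i + 1)).card }

/-!
Split a candidate `u` at the start `m` of its last maximal constant run. Its cost is then the
cost of the prefix `u 0, …, u (m - 1)`, plus `γ` for the jump at `m - 1`, plus the squared error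
of a constant on `[m, r)`, which is at least the segment error since the mean is the best
constant fit. Conversely, gluing the mean of `[m, r)` onto any prefix adds at most one jump.
When `m = 0` there is no jump, and the convention `P 0 = -γ` absorbs the extra `γ`.
-/

open Finset

def segmentError {ι 𝕜 : Type*} [Field 𝕜] (f : ι → 𝕜) (s : Finset ι) : 𝕜 :=
  ∑ i ∈ s, (f i - (∑ j ∈ s, f j) / #s) ^ 2

theorem segmentError_le_sum_sq_sub {ι 𝕜 : Type*} [Field 𝕜] [LinearOrder 𝕜]
    [IsStrictOrderedRing 𝕜] (f : ι → 𝕜) (s : Finset ι) (c : 𝕜) :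
    segmentError f s ≤ ∑ i ∈ s, (f i - c) ^ 2 := by
  rcases s.eq_empty_or_nonempty with rfl | hs
  · simp [segmentError]
  set μ := (∑ j ∈ s, f j) / #s
  have hμ : ∑ i ∈ s, (f i - μ) = 0 := by
    rw [sum_sub_distrib, sum_const, nsmul_eq_mul, mul_div_cancel₀ _ (by simpa using hs.ne_empty),
      sub_self]
  have hsplit : ∑ i ∈ s, (f i - c) ^ 2 = ∑ i ∈ s, (f i - μ) ^ 2 + #s * (μ - c) ^ 2 := by
    calc ∑ i ∈ s, (f i - c) ^ 2
        = ∑ i ∈ s, ((f i - μ) ^ 2 + 2 * (μ - c) * (f i - μ) + (μ - c) ^ 2) :=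
          sum_congr rfl fun _ _ => by ring
      _ = _ := by rw [sum_add_distrib, sum_add_distrib, ← mul_sum, hμ, sum_const, nsmul_eq_mul,
          mul_zero, add_zero]
  rw [segmentError, hsplit]
  exact le_add_of_nonneg_right (by positivity)

theorem exists_maximal_const_tail {α : Type*} (u : ℕ → α) {r : ℕ} (hr : 0 < r) :
    ∃ m < r, (∀ i ∈ Ico m r, u i = u m) ∧ (0 < m → u (m - 1) ≠ u m) := by
  induction r, hr using Nat.le_induction with
  | base => exact ⟨0, one_pos, by simp, by simp⟩
  | succ r hr ih =>
    obtain ⟨m, hmr, hconst, hjump⟩ := ih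
    by_cases h : u r = u (r - 1)
    · refine ⟨m, by omega, fun i hi => ?_, hjump⟩
      rw [mem_Ico] at hi
      obtain hir | rfl : i < r ∨ i = r := by omega
      · exact hconst i (mem_Ico.mpr ⟨hi.1, hir⟩)
      · rw [h, hconst _ (mem_Ico.mpr ⟨by omega, by omega⟩)]
    · refine ⟨r, r.lt_succ_self, fun i hi => ?_, fun _ => Ne.symm h⟩
      rw [show i = r by simp at hi; omega]

section Jumps

variable {α : Type*} [DecidableEq α] (u v : ℕ → α) {k m r : ℕ}

def jumpCount (k : ℕ) : ℕ := #{i ∈ range k | u i ≠ u (i + 1)}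

theorem jumpCount_eq_sum (k : ℕ) :
    jumpCount u k = ∑ i ∈ range k, if u i ≠ u (i + 1) then 1 else 0 :=
  card_filter _ _

theorem jumpCount_succ (k : ℕ) :
    jumpCount u (k + 1) = jumpCount u k + if u k ≠ u (k + 1) then 1 else 0 := by
  simp only [jumpCount_eq_sum, sum_range_succ]

variable {u v}

theorem jumpCount_eq_of_forall_eq (hmk : m ≤ k) (h : ∀ i ∈ Ico m k, u i = u (i + 1)) :
    jumpCount u k = jumpCount u m := by
  rw [jumpCount_eq_sum, jumpCount_eq_sum, ← sum_range_add_sum_Ico _ hmk, add_eq_left]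
  exact sum_eq_zero fun i hi => by simp [h i hi]

theorem jumpCount_congr (h : ∀ i ≤ k, u i = v i) : jumpCount u k = jumpCount v k := by
  simp only [jumpCount_eq_sum]
  exact sum_congr rfl fun i hi => by
    rw [h i (by simp at hi; omega), h (i + 1) (by simp at hi; omega)]

theorem jumpCount_of_const_tail (hm : 0 < m) (hmr : m < r) (h : ∀ i ∈ Ico m r, u i = u m) :
    jumpCount u (r - 1) = jumpCount u (m - 1) + if u (m - 1) ≠ u m then 1 else 0 := by
  obtain ⟨m, rfl⟩ := Nat.exists_eq_add_one_of_ne_zero hm.ne'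
  have htail : jumpCount u (r - 1) = jumpCount u (m + 1) :=
    jumpCount_eq_of_forall_eq (by omega) fun i hi => by
      simp only [mem_Ico] at hi
      rw [h i (mem_Ico.mpr ⟨by omega, by omega⟩), h (i + 1) (mem_Ico.mpr ⟨by omega, by omega⟩)]
  rw [htail, jumpCount_succ, Nat.add_sub_cancel]

end Jumps

section Potts

variable (γ : ℝ) (g u : ℕ → ℝ) {m r : ℕ}

noncomputable def pottsCost (r : ℕ) : ℝ :=
  ∑ i ∈ range r, (u i - g i) ^ 2 + γ * jumpCount u (r - 1)

theorem pottsVal_eq_iInf (hr : r ≠ 0) : pottsVal γ g r = ⨅ u, pottsCost γ g u r := by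
  obtain ⟨r, rfl⟩ := Nat.exists_eq_add_one_of_ne_zero hr
  simp only [pottsVal, pottsCost, jumpCount, Nat.add_sub_cancel, iInf, Set.range, eq_comm]

variable {γ g u}

theorem pottsCost_nonneg (hγ : 0 ≤ γ) : 0 ≤ pottsCost γ g u r := by
  unfold pottsCost; positivity

theorem bddBelow_range_pottsCost (hγ : 0 ≤ γ) :
    BddBelow (Set.range fun u => pottsCost γ g u r) :=
  ⟨0, Set.forall_mem_range.mpr fun _ => pottsCost_nonneg hγ⟩

theorem pottsVal_le_pottsCost (hγ : 0 ≤ γ) (hr : r ≠ 0) : pottsVal γ g r ≤ pottsCost γ g u r := by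
  rw [pottsVal_eq_iInf γ g hr]
  exact ciInf_le (bddBelow_range_pottsCost hγ) u

theorem pottsCost_congr {v : ℕ → ℝ} (h : ∀ i < m, u i = v i) :
    pottsCost γ g u m = pottsCost γ g v m := by
  rcases m.eq_zero_or_pos with rfl | hm
  · simp [pottsCost, jumpCount]
  rw [pottsCost, pottsCost, jumpCount_congr fun i hi => h i (by omega),
    sum_congr rfl fun i hi => by rw [h i (mem_range.mp hi)]]

theorem pottsCost_of_const_tail (hm : 0 < m) (hmr : m < r) (h : ∀ i ∈ Ico m r, u i = u m) :
    pottsCost γ g u r = pottsCost γ g u m + γ * (if u (m - 1) ≠ u m then 1 else 0 : ℕ) +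
      ∑ i ∈ Ico m r, (u m - g i) ^ 2 := by
  have htail : ∑ i ∈ Ico m r, (u i - g i) ^ 2 = ∑ i ∈ Ico m r, (u m - g i) ^ 2 :=
    sum_congr rfl fun i hi => by rw [h i hi]
  rw [pottsCost, pottsCost, jumpCount_of_const_tail hm hmr h, ← sum_range_add_sum_Ico _ hmr.le,
    htail]
  push_cast
  ring

theorem pottsVal_le_add_segmentError (hγ : 0 ≤ γ) (hmr : m < r) :
    pottsVal γ g r ≤ pottsVal γ g m + γ + segmentError g (Ico m r) := by
  set c := (∑ j ∈ Ico m r, g j) / #(Ico m r)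
  have hconst : ∑ i ∈ Ico m r, (c - g i) ^ 2 = segmentError g (Ico m r) :=
    sum_congr rfl fun _ _ => sub_sq_comm _ _
  rcases m.eq_zero_or_pos with rfl | hm
  · calc pottsVal γ g r ≤ pottsCost γ g (fun _ => c) r := pottsVal_le_pottsCost hγ (by omega)
      _ = segmentError g (Ico 0 r) := by
        rw [← hconst, ← range_eq_Ico]
        simp [pottsCost, jumpCount]
      _ = pottsVal γ g 0 + γ + segmentError g (Ico 0 r) := by simp [pottsVal]
  suffices pottsVal γ g r - γ - segmentError g (Ico m r) ≤ ⨅ u, pottsCost γ g u m by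
    rw [pottsVal_eq_iInf γ g hm.ne']
    linarith
  refine le_ciInf fun u => ?_
  set v := fun i => if i < m then u i else c
  have hv : ∀ i ∈ Ico m r, v i = v m := fun i hi => by
    simp only [v, if_neg (not_lt.mpr (mem_Ico.mp hi).1), lt_irrefl, if_false]
  have hcost := pottsCost_of_const_tail (γ := γ) (g := g) hm hmr hv
  rw [pottsCost_congr fun i hi => if_pos hi, show v m = c from if_neg (lt_irrefl m), hconst]
    at hcost
  have hjump : γ * (if v (m - 1) ≠ c then 1 else 0 : ℕ) ≤ γ := by
    split_ifs <;> simp [hγ]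
  linarith [pottsVal_le_pottsCost (g := g) (u := v) hγ (by omega : r ≠ 0)]

theorem exists_add_segmentError_le_pottsCost (hγ : 0 ≤ γ) (u : ℕ → ℝ) (hr : 0 < r) :
    ∃ m < r, pottsVal γ g m + γ + segmentError g (Ico m r) ≤ pottsCost γ g u r := by
  obtain ⟨m, hmr, hconst, hjump⟩ := exists_maximal_const_tail u hr
  refine ⟨m, hmr, ?_⟩
  have hseg : segmentError g (Ico m r) ≤ ∑ i ∈ Ico m r, (u m - g i) ^ 2 := by
    simpa only [sub_sq_comm (g _)] using segmentError_le_sum_sq_sub g (Ico m r) (u m)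
  rcases m.eq_zero_or_pos with rfl | hm
  · have hdata : ∑ i ∈ range r, (u i - g i) ^ 2 = ∑ i ∈ Ico 0 r, (u 0 - g i) ^ 2 := by
      rw [range_eq_Ico]
      exact sum_congr rfl fun i hi => by rw [hconst i hi]
    have hjumps : 0 ≤ γ * jumpCount u (r - 1) := by positivity
    rw [pottsCost, hdata]
    simp only [pottsVal]
    linarith
  rw [pottsCost_of_const_tail hm hmr hconst, if_pos (hjump hm)]
  push_cast
  linarith [pottsVal_le_pottsCost (g := g) (u := u) hγ hm.ne']

end Potts

theorem potts_bellman_recursion_general (γ : ℝ) (hγ : 0 < γ) (g : ℕ → ℝ) (r : ℕ)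
    (hr : 1 ≤ r) :
    pottsVal γ g r =
      (Finset.Icc 1 r).inf' (Finset.nonempty_Icc.mpr hr) fun l =>
        pottsVal γ g (l - 1) + γ +
          ∑ i ∈ Finset.Icc (l - 1) (r - 1),
            (g i - (∑ j ∈ Finset.Icc (l - 1) (r - 1), g j) / ((r - l + 1 : ℕ) : ℝ)) ^ 2 := by
  have hsegment : ∀ l ∈ Icc 1 r,
      ∑ i ∈ Icc (l - 1) (r - 1),
          (g i - (∑ j ∈ Icc (l - 1) (r - 1), g j) / ((r - l + 1 : ℕ) : ℝ)) ^ 2 =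
        segmentError g (Ico (l - 1) r) := fun l hl => by
    have hIcc : Icc (l - 1) (r - 1) = Ico (l - 1) r := by ext; simp; omega
    rw [mem_Icc] at hl
    rw [segmentError, hIcc, Nat.card_Ico, show r - (l - 1) = r - l + 1 by omega]
  rw [inf'_congr _ rfl fun l hl => congrArg _ (hsegment l hl)]
  refine le_antisymm (le_inf' _ _ fun l hl => ?_) ?_
  · exact pottsVal_le_add_segmentError hγ.le (by rw [mem_Icc] at hl; omega)
  rw [pottsVal_eq_iInf γ g (by omega)]
  refine le_ciInf fun u => ?_
  obtain ⟨m, hmr, hm⟩ := exists_add_segmentError_le_pottsCost hγ.le u hr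
  refine (inf'_le _ (mem_Icc.mpr ⟨Nat.le_add_left 1 m, hmr⟩ : m + 1 ∈ Icc 1 r)).trans ?_
  simpa using hm

theorem potts_bellman_recursion (γ : ℝ) (hγ : 0 < γ) (g : ℕ → ℝ) (n r : ℕ)
    (hr : 1 ≤ r) (hrn : r ≤ n) :
    pottsVal γ g r =
      (Finset.Icc 1 r).inf' (Finset.nonempty_Icc.mpr hr) fun l =>
        pottsVal γ g (l - 1) + γ +
          ∑ i ∈ Finset.Icc (l - 1) (r - 1),
            (g i - (∑ j ∈ Finset.Icc (l - 1) (r - 1), g j) / ((r - l + 1 : ℕ) : ℝ)) ^ 2 :=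
  potts_bellman_recursion_general γ hγ g r hr
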